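/- arXiv:1507.08908 — 3 statements merged into one kernel-verified Lean document; each statement's English description precedes it below -/
import Mathlib

section
/- Let (A,∘,α) be a Hom-Novikov superalgebra. Define on homogeneous elements the supercommutator [x,y]⁻ = x∘y − (−1)^{|x||y|} y∘x, extended bilinearly. Then (A, [·,·]⁻, ∘, α) is a super Hom-Gel'fand-Dorfman bialgebra. -/
noncomputable section

/-- The sign `(-1)^{|x||y|}` attached to parities `i, j` in `ℤ₂`. -/
def sg (i j : ZMod 2) : ℂ := (-1 : ℂ) ^ (i.val * j.val)

variable {A : Type*} [AddCommGroup A] [Module ℂ A]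

/-- `gr` makes `A` into a superspace: `A = A₀ ⊕ A₁`. -/
def IsSupergrading (gr : ZMod 2 → Submodule ℂ A) : Prop :=
  (∀ x : A, ∃ x0 ∈ gr 0, ∃ x1 ∈ gr 1, x = x0 + x1) ∧ (gr 0 ⊓ gr 1 = ⊥)

/-- An even linear map: it preserves the grading. -/
def EvenLin (gr : ZMod 2 → Submodule ℂ A) (α : A →ₗ[ℂ] A) : Prop :=
  ∀ i : ZMod 2, ∀ x ∈ gr i, α x ∈ gr i

/-- An even bilinear map: it adds parities. -/
def EvenBilin (gr : ZMod 2 → Submodule ℂ A) (m : A →ₗ[ℂ] A →ₗ[ℂ] A) : Prop :=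
  ∀ i j : ZMod 2, ∀ x ∈ gr i, ∀ y ∈ gr j, m x y ∈ gr (i + j)

/-- A Hom-Lie superalgebra structure on the superspace `(A, gr)`. -/
def HomLieSuper (gr : ZMod 2 → Submodule ℂ A) (br : A →ₗ[ℂ] A →ₗ[ℂ] A)
    (α : A →ₗ[ℂ] A) : Prop :=
  EvenLin gr α ∧ EvenBilin gr br ∧
  (∀ (i j : ZMod 2), ∀ x ∈ gr i, ∀ y ∈ gr j, br x y = -(sg i j • br y x)) ∧
  (∀ (i j k : ZMod 2), ∀ x ∈ gr i, ∀ y ∈ gr j, ∀ z ∈ gr k,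
    sg i k • br (br x y) (α z) + sg i j • br (br y z) (α x)
      + sg j k • br (br z x) (α y) = 0)

/-- A Hom-Novikov superalgebra structure on the superspace `(A, gr)`. -/
def HomNovikovSuper (gr : ZMod 2 → Submodule ℂ A) (c : A →ₗ[ℂ] A →ₗ[ℂ] A)
    (α : A →ₗ[ℂ] A) : Prop :=
  EvenLin gr α ∧ EvenBilin gr c ∧
  (∀ (i j k : ZMod 2), ∀ x ∈ gr i, ∀ y ∈ gr j, ∀ z ∈ gr k,
    c (c x y) (α z) - c (α x) (c y z) = sg i j • (c (c y x) (α z) - c (α y) (c x z))) ∧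
  (∀ (i j k : ZMod 2), ∀ x ∈ gr i, ∀ y ∈ gr j, ∀ z ∈ gr k,
    c (c x y) (α z) = sg j k • c (c x z) (α y))

/-- A super Hom-Gel'fand-Dorfman bialgebra structure on the superspace `(A, gr)`. -/
def SuperHomGD (gr : ZMod 2 → Submodule ℂ A) (br c : A →ₗ[ℂ] A →ₗ[ℂ] A)
    (α : A →ₗ[ℂ] A) : Prop :=
  HomLieSuper gr br α ∧ HomNovikovSuper gr c α ∧
  (∀ (i j k : ZMod 2), ∀ x ∈ gr i, ∀ y ∈ gr j, ∀ z ∈ gr k,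
    br (c x y) (α z) - sg j k • br (c x z) (α y) + c (br x y) (α z)
      - sg j k • c (br x z) (α y) - c (α x) (br y z) = 0)

/-- A Lie superalgebra structure on the superspace `(A, gr)`. -/
def LieSuper (gr : ZMod 2 → Submodule ℂ A) (br : A →ₗ[ℂ] A →ₗ[ℂ] A) : Prop :=
  EvenBilin gr br ∧
  (∀ (i j : ZMod 2), ∀ x ∈ gr i, ∀ y ∈ gr j, br x y = -(sg i j • br y x)) ∧
  (∀ (i j k : ZMod 2), ∀ x ∈ gr i, ∀ y ∈ gr j, ∀ z ∈ gr k,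
    sg i k • br (br x y) z + sg i j • br (br y z) x + sg j k • br (br z x) y = 0)

/-- A Novikov superalgebra structure on the superspace `(A, gr)`. -/
def NovikovSuper (gr : ZMod 2 → Submodule ℂ A) (c : A →ₗ[ℂ] A →ₗ[ℂ] A) : Prop :=
  EvenBilin gr c ∧
  (∀ (i j k : ZMod 2), ∀ x ∈ gr i, ∀ y ∈ gr j, ∀ z ∈ gr k,
    c (c x y) z - c x (c y z) = sg i j • (c (c y x) z - c y (c x z))) ∧
  (∀ (i j k : ZMod 2), ∀ x ∈ gr i, ∀ y ∈ gr j, ∀ z ∈ gr k,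
    c (c x y) z = sg j k • c (c x z) y)

/-- A super Gel'fand-Dorfman bialgebra structure on the superspace `(A, gr)`. -/
def SuperGD (gr : ZMod 2 → Submodule ℂ A) (br c : A →ₗ[ℂ] A →ₗ[ℂ] A) : Prop :=
  LieSuper gr br ∧ NovikovSuper gr c ∧
  (∀ (i j k : ZMod 2), ∀ x ∈ gr i, ∀ y ∈ gr j, ∀ z ∈ gr k,
    br (c x y) z - sg j k • br (c x z) y + c (br x y) z
      - sg j k • c (br x z) y - c x (br y z) = 0)

/-! Expanding `[x,y]⁻`, the super Hom-Jacobi identity becomes a signed sum of Hom-associators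
`(x∘y)∘α(z) − α(x)∘(y∘z)` that cancel in pairs by Hom-left-symmetry, the first Hom-Novikov axiom;
the Hom-Gel'fand-Dorfman compatibility follows from Hom-left-symmetry together with the second
axiom `(x∘y)∘α(z) = ±(x∘z)∘α(y)`. The sign bookkeeping only needs that `sg` is symmetric,
multiplicative in each argument and squares to `1`. -/

lemma sg_comm (i j : ZMod 2) : sg i j = sg j i := by rw [sg, sg, Nat.mul_comm]

lemma sg_mul_self (i j : ZMod 2) : sg i j * sg i j = 1 := by
  rw [sg, ← pow_add]
  exact Even.neg_one_pow ⟨_, rfl⟩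

lemma sg_mul_self_smul (i j : ZMod 2) (v : A) : (sg i j * sg i j) • v = v := by
  rw [sg_mul_self, one_smul]

lemma sg_add_left (i j k : ZMod 2) : sg (i + j) k = sg i k * sg j k := by
  rw [sg, sg, sg, ← pow_add, ← add_mul, ZMod.val_add, neg_one_pow_eq_pow_mod_two, Nat.mul_mod,
    Nat.mod_mod, ← Nat.mul_mod, ← neg_one_pow_eq_pow_mod_two]

def IsSupercommutator (gr : ZMod 2 → Submodule ℂ A) (c br : A →ₗ[ℂ] A →ₗ[ℂ] A) : Prop :=
  ∀ (i j : ZMod 2), ∀ x ∈ gr i, ∀ y ∈ gr j, br x y = c x y - sg i j • c y x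

def HomLeftSymmSuper (gr : ZMod 2 → Submodule ℂ A) (c : A →ₗ[ℂ] A →ₗ[ℂ] A)
    (α : A →ₗ[ℂ] A) : Prop :=
  ∀ (i j k : ZMod 2), ∀ x ∈ gr i, ∀ y ∈ gr j, ∀ z ∈ gr k,
    c (c x y) (α z) - c (α x) (c y z) = sg i j • (c (c y x) (α z) - c (α y) (c x z))

namespace IsSupercommutator

variable {gr : ZMod 2 → Submodule ℂ A} {c br : A →ₗ[ℂ] A →ₗ[ℂ] A} {α : A →ₗ[ℂ] A}

theorem evenBilin (hbr : IsSupercommutator gr c br) (hc : EvenBilin gr c) :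
    EvenBilin gr br := by
  intro i j x hx y hy
  rw [hbr i j x hx y hy]
  refine sub_mem (hc i j x hx y hy) (Submodule.smul_mem _ _ ?_)
  rw [add_comm i j]
  exact hc j i y hy x hx

theorem neg_sg_smul_swap (hbr : IsSupercommutator gr c br) (i j : ZMod 2) (x : A) (hx : x ∈ gr i)
    (y : A) (hy : y ∈ gr j) : br x y = -(sg i j • br y x) := by
  rw [hbr i j x hx y hy, hbr j i y hy x hx, sg_comm j i]
  linear_combination (norm := module) -sg_mul_self_smul i j (c x y)

theorem hom_jacobi (hbr : IsSupercommutator gr c br) (hα : EvenLin gr α) (hc : EvenBilin gr c)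
    (hls : HomLeftSymmSuper gr c α) (i j k : ZMod 2) (x : A) (hx : x ∈ gr i) (y : A)
    (hy : y ∈ gr j) (z : A) (hz : z ∈ gr k) :
    sg i k • br (br x y) (α z) + sg i j • br (br y z) (α x)
      + sg j k • br (br z x) (α y) = 0 := by
  have hbrE := hbr.evenBilin hc
  rw [hbr (i + j) k _ (hbrE i j x hx y hy) _ (hα k z hz),
    hbr (j + k) i _ (hbrE j k y hy z hz) _ (hα i x hx),
    hbr (k + i) j _ (hbrE k i z hz x hx) _ (hα j y hy),
    hbr i j x hx y hy, hbr j k y hy z hz, hbr k i z hz x hx]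
  simp only [map_sub, map_smul, LinearMap.sub_apply, LinearMap.smul_apply]
  rw [sg_add_left i j k, sg_add_left j k i, sg_add_left k i j,
    sg_comm j i, sg_comm k i, sg_comm k j]
  have hxyz := hls i j k x hx y hy z hz
  have hyzx := hls j k i y hy z hz x hx
  have hzxy := hls k i j z hz x hx y hy
  rw [sg_comm k i] at hzxy
  linear_combination (norm := module) sg i k • hxyz + sg i j • hyzx + sg j k • hzxy
    - sg j k • sg_mul_self_smul i k (c (α z) (c x y))
    + (sg i j * sg j k) • sg_mul_self_smul i k (c (α z) (c y x))
    - sg i k • sg_mul_self_smul i j (c (α x) (c y z))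
    + (sg i k * sg j k) • sg_mul_self_smul i j (c (α x) (c z y))
    - sg i j • sg_mul_self_smul j k (c (α y) (c z x))
    + (sg i j * sg i k) • sg_mul_self_smul j k (c (α y) (c x z))

theorem homLieSuper (hbr : IsSupercommutator gr c br) (hα : EvenLin gr α) (hc : EvenBilin gr c)
    (hls : HomLeftSymmSuper gr c α) : HomLieSuper gr br α :=
  ⟨hα, hbr.evenBilin hc, hbr.neg_sg_smul_swap, hbr.hom_jacobi hα hc hls⟩

theorem homGD_compat (hbr : IsSupercommutator gr c br) (hα : EvenLin gr α) (hc : EvenBilin gr c)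
    (hls : HomLeftSymmSuper gr c α)
    (hrc : ∀ (i j k : ZMod 2), ∀ x ∈ gr i, ∀ y ∈ gr j, ∀ z ∈ gr k,
      c (c x y) (α z) = sg j k • c (c x z) (α y))
    (i j k : ZMod 2) (x : A) (hx : x ∈ gr i) (y : A) (hy : y ∈ gr j) (z : A) (hz : z ∈ gr k) :
    br (c x y) (α z) - sg j k • br (c x z) (α y) + c (br x y) (α z)
      - sg j k • c (br x z) (α y) - c (α x) (br y z) = 0 := by
  rw [hbr (i + j) k _ (hc i j x hx y hy) _ (hα k z hz),
    hbr (i + k) j _ (hc i k x hx z hz) _ (hα j y hy),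
    hbr i j x hx y hy, hbr i k x hx z hz, hbr j k y hy z hz]
  simp only [map_sub, map_smul, LinearMap.sub_apply, LinearMap.smul_apply]
  rw [sg_add_left i j k, sg_add_left i k j, sg_comm k j]
  have hxyz := hls i j k x hx y hy z hz
  have hzxy := hls k i j z hz x hx y hy
  rw [sg_comm k i] at hzxy
  linear_combination (norm := module) hrc i j k x hx y hy z hz + hxyz
    + (sg i k * sg j k) • hzxy
    + sg j k • sg_mul_self_smul i k (c (c x z) (α y))
    + sg i j • sg_mul_self_smul j k (c (α y) (c x z))
    - sg j k • sg_mul_self_smul i k (c (α x) (c z y))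

end IsSupercommutator

theorem superHomGD_of_homNovikovSuper_general
    {A : Type*} [AddCommGroup A] [Module ℂ A]
    (gr : ZMod 2 → Submodule ℂ A)
    (c : A →ₗ[ℂ] A →ₗ[ℂ] A) (α : A →ₗ[ℂ] A)
    (hNov : HomNovikovSuper gr c α)
    (br : A →ₗ[ℂ] A →ₗ[ℂ] A)
    (hbr : ∀ (i j : ZMod 2), ∀ x ∈ gr i, ∀ y ∈ gr j,
      br x y = c x y - sg i j • c y x) :
    SuperHomGD gr br c α := by
  obtain ⟨hα, hc, hls, hrc⟩ := hNov
  have hsc : IsSupercommutator gr c br := hbr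
  exact ⟨hsc.homLieSuper hα hc hls, ⟨hα, hc, hls, hrc⟩, hsc.homGD_compat hα hc hls hrc⟩

/-- If `(A, ∘, α)` is a Hom-Novikov superalgebra and `[x,y]⁻ =
x∘y − (−1)^{|x||y|} y∘x` on homogeneous elements (extended bilinearly), then
`(A, [·,·]⁻, ∘, α)` is a super Hom-Gel'fand-Dorfman bialgebra. -/
theorem superHomGD_of_homNovikovSuper
    {A : Type*} [AddCommGroup A] [Module ℂ A]
    (gr : ZMod 2 → Submodule ℂ A) (hgr : IsSupergrading gr)
    (c : A →ₗ[ℂ] A →ₗ[ℂ] A) (α : A →ₗ[ℂ] A)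
    (hNov : HomNovikovSuper gr c α)
    (br : A →ₗ[ℂ] A →ₗ[ℂ] A)
    (hbr : ∀ (i j : ZMod 2), ∀ x ∈ gr i, ∀ y ∈ gr j,
      br x y = c x y - sg i j • c y x) :
    SuperHomGD gr br c α :=
  superHomGD_of_homNovikovSuper_general gr c α hNov br hbr

end
end

section
/- Let (A,∘) be a Novikov superalgebra and α an even algebra homomorphism of (A,∘), i.e. α(x∘y) = α(x)∘α(y). Define x ∘_α y = α(x)∘α(y). Then (A, ∘_α, α) is a Hom-Novikov superalgebra. -/
noncomputable section

variable {A : Type*} [AddCommGroup A] [Module ℂ A]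

/-! Since `α` is multiplicative, each Hom-Novikov identity of `x ∘_α y = α x ∘ α y` at
`(x, y, z)` is the corresponding Novikov identity of `∘` at `(α² x, α² y, α² z)`. -/

theorem EvenBilin.compl₁₂ {gr : ZMod 2 → Submodule ℂ A} {m : A →ₗ[ℂ] A →ₗ[ℂ] A}
    {f g : A →ₗ[ℂ] A} (hm : EvenBilin gr m) (hf : EvenLin gr f) (hg : EvenLin gr g) :
    EvenBilin gr (m.compl₁₂ f g) :=
  fun i j x hx y hy => hm i j _ (hf i x hx) _ (hg j y hy)

section Twist

variable {R M : Type*} [CommSemiring R] [AddCommMonoid M] [Module R M]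
  {m : M →ₗ[R] M →ₗ[R] M} {α : M →ₗ[R] M}

theorem LinearMap.compl₁₂_self_apply_left_of_map_mul (hα : ∀ x y, α (m x y) = m (α x) (α y))
    (x y z : M) :
    m.compl₁₂ α α (m.compl₁₂ α α x y) (α z) = m (m (α (α x)) (α (α y))) (α (α z)) := by
  simp only [LinearMap.compl₁₂_apply, hα]

theorem LinearMap.compl₁₂_self_apply_right_of_map_mul (hα : ∀ x y, α (m x y) = m (α x) (α y))
    (x y z : M) :
    m.compl₁₂ α α (α x) (m.compl₁₂ α α y z) = m (α (α x)) (m (α (α y)) (α (α z))) := by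
  simp only [LinearMap.compl₁₂_apply, hα]

end Twist

theorem homNovikovSuper_of_novikovSuper_general
    {A : Type*} [AddCommGroup A] [Module ℂ A]
    (gr : ZMod 2 → Submodule ℂ A)
    (c : A →ₗ[ℂ] A →ₗ[ℂ] A) (hNov : NovikovSuper gr c)
    (α : A →ₗ[ℂ] A) (hα : EvenLin gr α)
    (hhom : ∀ x y : A, α (c x y) = c (α x) (α y)) :
    HomNovikovSuper gr (c.compl₁₂ α α) α := by
  obtain ⟨hmul, hleftSymm, hrightComm⟩ := hNov
  have hα₂ : ∀ i, ∀ x ∈ gr i, α (α x) ∈ gr i := fun i x hx => hα i _ (hα i x hx)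
  refine ⟨hα, hmul.compl₁₂ hα hα, ?_, ?_⟩
  · intro i j k x hx y hy z hz
    simp only [LinearMap.compl₁₂_self_apply_left_of_map_mul hhom,
      LinearMap.compl₁₂_self_apply_right_of_map_mul hhom]
    exact hleftSymm i j k _ (hα₂ i x hx) _ (hα₂ j y hy) _ (hα₂ k z hz)
  · intro i j k x hx y hy z hz
    simp only [LinearMap.compl₁₂_self_apply_left_of_map_mul hhom]
    exact hrightComm i j k _ (hα₂ i x hx) _ (hα₂ j y hy) _ (hα₂ k z hz)

/-- If `(A, ∘)` is a Novikov superalgebra and `α` an even algebra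
homomorphism of `(A, ∘)`, then `(A, ∘_α, α)` with `x ∘_α y = α(x)∘α(y)` is a
Hom-Novikov superalgebra. -/
theorem homNovikovSuper_of_novikovSuper
    {A : Type*} [AddCommGroup A] [Module ℂ A]
    (gr : ZMod 2 → Submodule ℂ A) (hgr : IsSupergrading gr)
    (c : A →ₗ[ℂ] A →ₗ[ℂ] A) (hNov : NovikovSuper gr c)
    (α : A →ₗ[ℂ] A) (hα : EvenLin gr α)
    (hhom : ∀ x y : A, α (c x y) = c (α x) (α y)) :
    HomNovikovSuper gr (c.compl₁₂ α α) α :=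
  homNovikovSuper_of_novikovSuper_general gr c hNov α hα hhom

end
end

section
/- Let (A,∘) be a Novikov superalgebra and α an even algebra endomorphism of (A,∘). Define x ∘_α y = α(x)∘α(y) and [x,y]⁻_α = α(x∘y) − (−1)^{|x||y|} α(y∘x) on homogeneous elements. Then (A, [·,·]⁻_α, ∘_α, α) is a super Hom-Gel'fand-Dorfman bialgebra. -/
noncomputable section

variable {A : Type*} [AddCommGroup A] [Module ℂ A]

/-!
A Novikov superalgebra with its supercommutator `[x, y]⁻ = x ∘ y - (-1)^{|x||y|} y ∘ x` is a
super Gel'fand-Dorfman bialgebra: super Jacobi only needs left-symmetry, and the compatibility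
identity is a combination of left-symmetry and right-commutativity. Since `α` is an even
endomorphism of `∘`, it is also one of `[·,·]⁻`, and the operations of the theorem are the Yau
twists `α ∘ [·,·]⁻` and `α ∘ ∘`. Twisting every operation of a super Gel'fand-Dorfman bialgebra
by such an `α` turns each defining identity into `α²` applied to the untwisted one, which gives
the Hom-identities.
-/

lemma ZMod.two_eq_zero_or_one (i : ZMod 2) : i = 0 ∨ i = 1 := by
  revert i; decide

@[simp] lemma sg_zero_left (j : ZMod 2) : sg 0 j = 1 := by simp [sg]

@[simp] lemma sg_zero_right (i : ZMod 2) : sg i 0 = 1 := by simp [sg]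

@[simp] lemma sg_one_one : sg 1 1 = -1 := by simp [sg, ZMod.val_one]

def LeftSymmetricSuper (gr : ZMod 2 → Submodule ℂ A) (c : A →ₗ[ℂ] A →ₗ[ℂ] A) : Prop :=
  ∀ (i j k : ZMod 2), ∀ x ∈ gr i, ∀ y ∈ gr j, ∀ z ∈ gr k,
    c (c x y) z - c x (c y z) = sg i j • (c (c y x) z - c y (c x z))

namespace IsSupergrading

variable {gr : ZMod 2 → Submodule ℂ A} {c : A →ₗ[ℂ] A →ₗ[ℂ] A}

lemma isCompl (hgr : IsSupergrading gr) : IsCompl (gr 1) (gr 0) := by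
  refine isCompl_iff.2 ⟨disjoint_iff.2 (by rw [inf_comm, hgr.2]), codisjoint_iff.2 ?_⟩
  refine eq_top_iff.2 fun x _ => ?_
  obtain ⟨x0, hx0, x1, hx1, rfl⟩ := hgr.1 x
  exact add_comm x1 x0 ▸ Submodule.add_mem_sup hx1 hx0

def oddPart (hgr : IsSupergrading gr) : A →ₗ[ℂ] A :=
  (gr 1).projection (gr 0) hgr.isCompl

lemma oddPart_of_mem_zero (hgr : IsSupergrading gr) {x : A} (hx : x ∈ gr 0) :
    hgr.oddPart x = 0 :=
  (Submodule.projection_apply_eq_zero_iff _).2 hx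

lemma oddPart_of_mem_one (hgr : IsSupergrading gr) {x : A} (hx : x ∈ gr 1) :
    hgr.oddPart x = x :=
  Submodule.projection_apply_of_mem_left _ hx

/-- The sign `(-1)^{|x||y|}` differs from `1` only on `A₁ × A₁`, where the correction term
`2 (oddPart y) ∘ (oddPart x)` turns `x ∘ y - y ∘ x` into `x ∘ y + y ∘ x`. -/
def superComm (hgr : IsSupergrading gr) (c : A →ₗ[ℂ] A →ₗ[ℂ] A) : A →ₗ[ℂ] A →ₗ[ℂ] A :=
  c - c.flip + (2 : ℂ) • (c.compl₁₂ hgr.oddPart hgr.oddPart).flip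

lemma superComm_apply (hgr : IsSupergrading gr) {i j : ZMod 2} {x y : A} (hx : x ∈ gr i)
    (hy : y ∈ gr j) :
    hgr.superComm c x y = c x y - sg i j • c y x := by
  obtain rfl | rfl := ZMod.two_eq_zero_or_one i <;>
  obtain rfl | rfl := ZMod.two_eq_zero_or_one j <;>
  simp [superComm, oddPart_of_mem_zero, oddPart_of_mem_one, hx, hy]
  module

lemma evenBilin_superComm (hgr : IsSupergrading gr) (hc : EvenBilin gr c) :
    EvenBilin gr (hgr.superComm c) := by
  intro i j x hx y hy
  rw [hgr.superComm_apply hx hy]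
  exact sub_mem (hc i j x hx y hy) (Submodule.smul_mem _ _ (add_comm j i ▸ hc j i y hy x hx))

lemma lieSuper_superComm (hgr : IsSupergrading gr) (hc : EvenBilin gr c)
    (hls : LeftSymmetricSuper gr c) :
    LieSuper gr (hgr.superComm c) := by
  refine ⟨hgr.evenBilin_superComm hc, fun i j x hx y hy => ?_, fun i j k x hx y hy z hz => ?_⟩
  · rw [hgr.superComm_apply hx hy, hgr.superComm_apply hy hx, smul_sub, smul_smul, sg_comm j i]
    obtain rfl | rfl := ZMod.two_eq_zero_or_one i <;>
    obtain rfl | rfl := ZMod.two_eq_zero_or_one j <;>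
    simp
  · have H1 := hls i j k x hx y hy z hz
    have H2 := hls i k j x hx z hz y hy
    have H3 := hls j k i y hy z hz x hx
    rw [hgr.superComm_apply (hgr.evenBilin_superComm hc i j x hx y hy) hz,
      hgr.superComm_apply (hgr.evenBilin_superComm hc j k y hy z hz) hx,
      hgr.superComm_apply (hgr.evenBilin_superComm hc k i z hz x hx) hy,
      hgr.superComm_apply hx hy, hgr.superComm_apply hy hz, hgr.superComm_apply hz hx]
    simp only [map_sub, map_smul, LinearMap.sub_apply, LinearMap.smul_apply, sg_add_left]
    linear_combination (norm := skip) sg i k • (H1 - sg j k • H2 + (sg i j * sg i k) • H3)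
    obtain rfl | rfl := ZMod.two_eq_zero_or_one i <;>
    obtain rfl | rfl := ZMod.two_eq_zero_or_one j <;>
    obtain rfl | rfl := ZMod.two_eq_zero_or_one k <;>
    simp only [sg_zero_left, sg_zero_right, sg_one_one] <;> module

end IsSupergrading

lemma NovikovSuper.superGD_superComm {gr : ZMod 2 → Submodule ℂ A} (hgr : IsSupergrading gr)
    {c : A →ₗ[ℂ] A →ₗ[ℂ] A} (hc : NovikovSuper gr c) : SuperGD gr (hgr.superComm c) c := by
  obtain ⟨hcEven, hls, hrc⟩ := hc
  refine ⟨hgr.lieSuper_superComm hcEven hls, ⟨hcEven, hls, hrc⟩, fun i j k x hx y hy z hz => ?_⟩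
  have H1 := hls i j k x hx y hy z hz
  have H2 := hls i k j x hx z hz y hy
  have H3 := hrc i j k x hx y hy z hz
  rw [hgr.superComm_apply (hcEven i j x hx y hy) hz, hgr.superComm_apply (hcEven i k x hx z hz) hy,
    hgr.superComm_apply hx hy, hgr.superComm_apply hx hz, hgr.superComm_apply hy hz]
  simp only [map_sub, map_smul, LinearMap.sub_apply, LinearMap.smul_apply, sg_add_left]
  linear_combination (norm := skip) H1 - sg j k • H2 + H3
  obtain rfl | rfl := ZMod.two_eq_zero_or_one i <;>
  obtain rfl | rfl := ZMod.two_eq_zero_or_one j <;>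
  obtain rfl | rfl := ZMod.two_eq_zero_or_one k <;>
  simp only [sg_zero_left, sg_zero_right, sg_one_one] <;> module

section YauTwist

def IsMultiplicativeOn (gr : ZMod 2 → Submodule ℂ A) (α : A →ₗ[ℂ] A)
    (m : A →ₗ[ℂ] A →ₗ[ℂ] A) : Prop :=
  ∀ (i j : ZMod 2), ∀ x ∈ gr i, ∀ y ∈ gr j, α (m x y) = m (α x) (α y)

/-- Only homogeneous values are prescribed, as for the bracket `[·,·]⁻_α` of the theorem. -/
def IsYauTwist (gr : ZMod 2 → Submodule ℂ A) (α : A →ₗ[ℂ] A) (m m' : A →ₗ[ℂ] A →ₗ[ℂ] A) :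
    Prop :=
  ∀ (i j : ZMod 2), ∀ x ∈ gr i, ∀ y ∈ gr j, m' x y = α (m x y)

variable {gr : ZMod 2 → Submodule ℂ A} {α : A →ₗ[ℂ] A} {m n m' n' : A →ₗ[ℂ] A →ₗ[ℂ] A}

lemma IsYauTwist.evenBilin (hm' : IsYauTwist gr α m m') (hα : EvenLin gr α)
    (hm : EvenBilin gr m) : EvenBilin gr m' := fun i j x hx y hy =>
  hm' i j x hx y hy ▸ hα _ _ (hm i j x hx y hy)

lemma IsYauTwist.apply_twist_left (hm' : IsYauTwist gr α m m') (hn' : IsYauTwist gr α n n')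
    (hα : EvenLin gr α) (hmα : IsMultiplicativeOn gr α m) (hn : EvenBilin gr n)
    {i j k : ZMod 2} {x y z : A} (hx : x ∈ gr i) (hy : y ∈ gr j) (hz : z ∈ gr k) :
    m' (n' x y) (α z) = α (α (m (n x y) z)) := by
  have hxy := hn i j x hx y hy
  rw [hn' i j x hx y hy, hm' _ k _ (hα _ _ hxy) _ (hα k z hz), hmα _ k _ hxy _ hz]

lemma IsYauTwist.apply_twist_right (hm' : IsYauTwist gr α m m')
    (hn' : IsYauTwist gr α n n') (hα : EvenLin gr α) (hmα : IsMultiplicativeOn gr α m)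
    (hn : EvenBilin gr n) {i j k : ZMod 2} {x y z : A} (hx : x ∈ gr i) (hy : y ∈ gr j)
    (hz : z ∈ gr k) :
    m' (α x) (n' y z) = α (α (m x (n y z))) := by
  have hyz := hn j k y hy z hz
  rw [hn' j k y hy z hz, hm' i _ _ (hα i x hx) _ (hα _ _ hyz), hmα i _ _ hx _ hyz]

lemma LieSuper.homLieSuper_of_isYauTwist (hm : LieSuper gr m) (hα : EvenLin gr α)
    (hmα : IsMultiplicativeOn gr α m) (hm' : IsYauTwist gr α m m') : HomLieSuper gr m' α := by
  obtain ⟨hmEven, hskew, hjac⟩ := hm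
  refine ⟨hα, hm'.evenBilin hα hmEven, fun i j x hx y hy => ?_, fun i j k x hx y hy z hz => ?_⟩
  · rw [hm' i j x hx y hy, hm' j i y hy x hx, hskew i j x hx y hy, map_neg, map_smul]
  · rw [hm'.apply_twist_left hm' hα hmα hmEven hx hy hz,
      hm'.apply_twist_left hm' hα hmα hmEven hy hz hx,
      hm'.apply_twist_left hm' hα hmα hmEven hz hx hy]
    simpa only [map_add, map_smul, map_zero] using
      congrArg (fun v => α (α v)) (hjac i j k x hx y hy z hz)

lemma NovikovSuper.homNovikovSuper_of_isYauTwist (hm : NovikovSuper gr m) (hα : EvenLin gr α)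
    (hmα : IsMultiplicativeOn gr α m) (hm' : IsYauTwist gr α m m') :
    HomNovikovSuper gr m' α := by
  obtain ⟨hmEven, hls, hrc⟩ := hm
  refine ⟨hα, hm'.evenBilin hα hmEven, fun i j k x hx y hy z hz => ?_,
    fun i j k x hx y hy z hz => ?_⟩
  · rw [hm'.apply_twist_left hm' hα hmα hmEven hx hy hz,
      hm'.apply_twist_right hm' hα hmα hmEven hx hy hz,
      hm'.apply_twist_left hm' hα hmα hmEven hy hx hz,
      hm'.apply_twist_right hm' hα hmα hmEven hy hx hz]
    simpa only [map_sub, map_smul] using congrArg (fun v => α (α v)) (hls i j k x hx y hy z hz)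
  · rw [hm'.apply_twist_left hm' hα hmα hmEven hx hy hz,
      hm'.apply_twist_left hm' hα hmα hmEven hx hz hy]
    simpa only [map_smul] using congrArg (fun v => α (α v)) (hrc i j k x hx y hy z hz)

lemma SuperGD.superHomGD_of_isYauTwist (h : SuperGD gr m n) (hα : EvenLin gr α)
    (hmα : IsMultiplicativeOn gr α m) (hnα : IsMultiplicativeOn gr α n)
    (hm' : IsYauTwist gr α m m') (hn' : IsYauTwist gr α n n') : SuperHomGD gr m' n' α := by
  obtain ⟨hLie, hNov, hcompat⟩ := h
  refine ⟨hLie.homLieSuper_of_isYauTwist hα hmα hm', hNov.homNovikovSuper_of_isYauTwist hα hnα hn',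
    fun i j k x hx y hy z hz => ?_⟩
  rw [hm'.apply_twist_left hn' hα hmα hNov.1 hx hy hz,
    hm'.apply_twist_left hn' hα hmα hNov.1 hx hz hy,
    hn'.apply_twist_left hm' hα hnα hLie.1 hx hy hz,
    hn'.apply_twist_left hm' hα hnα hLie.1 hx hz hy,
    hn'.apply_twist_right hm' hα hnα hLie.1 hx hy hz]
  simpa only [map_add, map_sub, map_smul, map_zero] using
    congrArg (fun v => α (α v)) (hcompat i j k x hx y hy z hz)

end YauTwist

/-- If `(A, ∘)` is a Novikov superalgebra with an even algebra
endomorphism `α`, then with `x ∘_α y = α(x)∘α(y)` and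
`[x,y]⁻_α = α(x∘y) − (−1)^{|x||y|} α(y∘x)` (on homogeneous elements),
`(A, [·,·]⁻_α, ∘_α, α)` is a super Hom-Gel'fand-Dorfman bialgebra. -/
theorem superHomGD_of_novikovSuper_endo
    {A : Type*} [AddCommGroup A] [Module ℂ A]
    (gr : ZMod 2 → Submodule ℂ A) (hgr : IsSupergrading gr)
    (c : A →ₗ[ℂ] A →ₗ[ℂ] A) (hNov : NovikovSuper gr c)
    (α : A →ₗ[ℂ] A) (hα : EvenLin gr α)
    (hhom : ∀ x y : A, α (c x y) = c (α x) (α y))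
    (brα : A →ₗ[ℂ] A →ₗ[ℂ] A)
    (hbrα : ∀ (i j : ZMod 2), ∀ x ∈ gr i, ∀ y ∈ gr j,
      brα x y = α (c x y) - sg i j • α (c y x)) :
    SuperHomGD gr brα (c.compl₁₂ α α) α := by
  have hcα : IsMultiplicativeOn gr α c := fun _ _ x _ y _ => hhom x y
  have hbrTwist : IsYauTwist gr α (hgr.superComm c) brα := fun i j x hx y hy => by
    rw [hbrα i j x hx y hy, hgr.superComm_apply hx hy, map_sub, map_smul]
  have hαComm : IsMultiplicativeOn gr α (hgr.superComm c) := fun i j x hx y hy => by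
    rw [hgr.superComm_apply hx hy, hgr.superComm_apply (hα i x hx) (hα j y hy), map_sub,
      map_smul, hhom, hhom]
  exact (hNov.superGD_superComm hgr).superHomGD_of_isYauTwist hα hαComm hcα hbrTwist
    fun _ _ x _ y _ => (hhom x y).symm

end
end
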